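/- arXiv:2011.13545 — 2 statements merged into one kernel-verified Lean document; each statement's English description precedes it below -/
import Mathlib

section
/- Let Γ be a graph on which a group G acts by graph automorphisms such that the quotient graph G\Γ is finite and every vertex of Γ has degree at most 2. Then every connected component Y of Γ is either finite or isometric (as a graph) to the bi-infinite line; in particular, no component is a half-line (a ray with one endpoint). -/
/-!
Let `w` be a vertex of degree at most one in an infinite component `C`. Since all degrees are at
most two, `C` is a ray issuing from `w`, so `x ↦ dist w x` is injective on `C`. As `G\Γ` is finite,
some `g ∈ G` moves a vertex of `C` to another vertex of `C`; then `g` preserves `C` and `g w` is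
again an end of `C`. A second end `g w ≠ w` would bound all distances from `w` and make `C` finite,
so `g w = w`; but an automorphism fixing `w` preserves distances from `w`, hence fixes `C`
pointwise, a contradiction.
-/

namespace SimpleGraph

variable {V W : Type*} {Γ : SimpleGraph V} {Γ' : SimpleGraph W} {u w x y z : V}

lemma Reachable.exists_adj_dist_eq_of_dist_eq_succ (hu : Γ.Reachable w u) {n : ℕ}
    (hd : Γ.dist w u = n + 1) : ∃ y, Γ.Adj y u ∧ Γ.Reachable w y ∧ Γ.dist w y = n := by
  obtain ⟨p, hp⟩ := hu.symm.exists_walk_length_eq_dist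
  rw [dist_comm, hd] at hp
  cases p with
  | nil => simp at hp
  | @cons _ y _ hadj q =>
    have hq : q.length = n := by simpa using hp
    have hwy : Γ.Reachable w y := ⟨q.reverse⟩
    refine ⟨y, hadj.symm, hwy, le_antisymm ?_ ?_⟩
    · simpa [hq] using Γ.dist_le q.reverse
    · have := hwy.dist_triangle_left u
      rw [hd, dist_eq_one_iff_adj.mpr hadj.symm] at this
      omega

lemma Reachable.exists_dist_eq_of_le (hu : Γ.Reachable w u) {k : ℕ} (hk : k ≤ Γ.dist w u) :
    ∃ x, Γ.Reachable w x ∧ Γ.dist w x = k := by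
  induction hn : Γ.dist w u generalizing u with
  | zero => exact ⟨u, hu, by omega⟩
  | succ n ih =>
    rcases hk.eq_or_lt with hk | hlt
    · exact ⟨u, hu, hk.symm⟩
    · obtain ⟨y, -, hwy, hy⟩ := hu.exists_adj_dist_eq_of_dist_eq_succ hn
      exact ih hwy (by omega) hy

lemma eq_of_adj_of_encard_neighborSet_le_two (hy : (Γ.neighborSet y).encard ≤ 2)
    (hz : Γ.Adj y z) (hu : Γ.Adj y u) (hx : Γ.Adj y x) (hzu : z ≠ u) (hzx : z ≠ x) : u = x := by
  by_contra hux
  have hsub : ({z, u, x} : Set V) ⊆ Γ.neighborSet y := by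
    rintro _ (rfl | rfl | rfl) <;> assumption
  have h3 : ({z, u, x} : Set V).encard = 3 := by
    rw [Set.encard_insert_of_notMem (by simp [hzu, hzx]), Set.encard_pair hux]
    rfl
  have := (Set.encard_le_encard hsub).trans hy
  rw [h3] at this
  exact absurd this (by decide)

lemma Reachable.dist_map_le (f : Γ →g Γ') (h : Γ.Reachable u x) :
    Γ'.dist (f u) (f x) ≤ Γ.dist u x := by
  obtain ⟨p, hp⟩ := h.exists_walk_length_eq_dist
  simpa [hp] using Γ'.dist_le (p.map f)

lemma Iso.dist_apply (φ : Γ ≃g Γ') (u x : V) : Γ'.dist (φ u) (φ x) = Γ.dist u x := by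
  by_cases h : Γ.Reachable u x
  · refine le_antisymm (h.dist_map_le φ.toHom) ?_
    simpa using ((Iso.reachable_iff (φ := φ)).mpr h).dist_map_le φ.symm.toHom
  · rw [dist_eq_zero_of_not_reachable h,
      dist_eq_zero_of_not_reachable (mt Iso.reachable_iff.mp h)]

lemma Iso.encard_neighborSet_apply (φ : Γ ≃g Γ') (u : V) :
    (Γ'.neighborSet (φ u)).encard = (Γ.neighborSet u).encard := by
  have : Γ'.neighborSet (φ u) = φ '' Γ.neighborSet u := by
    ext x
    refine ⟨fun h => ⟨φ.symm x, ?_, φ.apply_symm_apply x⟩, ?_⟩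
    · rwa [mem_neighborSet, ← φ.map_adj_iff, φ.apply_symm_apply]
    · rintro ⟨y, hy, rfl⟩
      exact φ.map_adj_iff.mpr hy
  rw [this, φ.injective.encard_image]

section MaxDegreeTwo

variable (hdeg : ∀ v, (Γ.neighborSet v).encard ≤ 2) (hw : (Γ.neighborSet w).encard ≤ 1)
include hdeg hw

lemma injOn_dist_of_encard_neighborSet_le_one : Set.InjOn (Γ.dist w) {x | Γ.Reachable w x} := by
  suffices ∀ n u x, Γ.Reachable w u → Γ.Reachable w x → Γ.dist w u = n → Γ.dist w x = n →
      u = x from fun u hu x hx h => this _ u x hu hx rfl h.symm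
  intro n
  induction n using Nat.strong_induction_on with
  | _ n ih =>
    intro u x hu hx hdu hdx
    match n, hdu, hdx with
    | 0, hdu, hdx => rw [← hu.dist_eq_zero_iff.mp hdu, ← hx.dist_eq_zero_iff.mp hdx]
    | 1, hdu, hdx =>
      exact Set.encard_le_one_iff.mp hw u x (dist_eq_one_iff_adj.mp hdu)
        (dist_eq_one_iff_adj.mp hdx)
    | m + 2, hdu, hdx =>
      obtain ⟨y, hyu, hwy, hy⟩ := hu.exists_adj_dist_eq_of_dist_eq_succ hdu
      obtain ⟨y', hyx, hwy', hy'⟩ := hx.exists_adj_dist_eq_of_dist_eq_succ hdx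
      obtain rfl : y = y' := ih (m + 1) (by omega) y y' hwy hwy' hy hy'
      obtain ⟨z, hzy, -, hz⟩ := hwy.exists_adj_dist_eq_of_dist_eq_succ hy
      exact eq_of_adj_of_encard_neighborSet_le_two (hdeg y) hzy.symm hyu hyx
        (by rintro rfl; omega) (by rintro rfl; omega)

lemma dist_le_dist_of_encard_neighborSet_le_one (hx : (Γ.neighborSet x).encard ≤ 1)
    (hwx : Γ.Reachable w x) (hne : w ≠ x) (hu : Γ.Reachable w u) :
    Γ.dist w u ≤ Γ.dist w x := by
  by_contra! hlt
  -- otherwise `x` has two neighbours, at distances `d - 1` and `d + 1` from `w`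
  obtain ⟨y, hwy, hy⟩ := hu.exists_dist_eq_of_le hlt
  obtain ⟨z, hzy, -, hz⟩ := hwy.exists_adj_dist_eq_of_dist_eq_succ hy
  obtain rfl : z = x := injOn_dist_of_encard_neighborSet_le_one hdeg hw
    (hwy.trans (Adj.reachable hzy).symm) hwx hz
  have hd : Γ.dist w z = Γ.dist w z - 1 + 1 := by
    have := hwx.pos_dist_of_ne hne
    omega
  obtain ⟨t, htz, -, ht⟩ := hwx.exists_adj_dist_eq_of_dist_eq_succ hd
  obtain rfl := Set.encard_le_one_iff.mp hx t y htz.symm hzy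
  omega

lemma finite_setOf_reachable_of_encard_neighborSet_le_one
    (hx : (Γ.neighborSet x).encard ≤ 1) (hwx : Γ.Reachable w x) (hne : w ≠ x) :
    {u | Γ.Reachable w u}.Finite :=
  Set.Finite.of_finite_image ((Set.finite_Iic (Γ.dist w x)).subset <| by
      rintro _ ⟨u, hu, rfl⟩
      exact dist_le_dist_of_encard_neighborSet_le_one hdeg hw hx hwx hne hu)
    (injOn_dist_of_encard_neighborSet_le_one hdeg hw)

lemma Iso.apply_eq_self_of_reachable (φ : Γ ≃g Γ) (hφ : φ w = w) (hx : Γ.Reachable w x) :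
    φ x = x := by
  refine injOn_dist_of_encard_neighborSet_le_one hdeg hw ?_ hx ?_
  · simpa [hφ] using (Iso.reachable_iff (φ := φ)).mpr hx
  · simpa [hφ] using φ.dist_apply w x

lemma Iso.apply_eq_self_of_infinite_setOf_reachable (hinf : {x | Γ.Reachable w x}.Infinite)
    (φ : Γ ≃g Γ) (hφ : Γ.Reachable w (φ w)) : φ w = w := by
  by_contra hne
  exact hinf <| finite_setOf_reachable_of_encard_neighborSet_le_one hdeg hw
    ((φ.encard_neighborSet_apply w).trans_le hw) hφ (Ne.symm hne)

end MaxDegreeTwo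

def smulIso {G : Type*} [Group G] [MulAction G V]
    (hact : ∀ (g : G) (u v : V), Γ.Adj u v ↔ Γ.Adj (g • u) (g • v)) (g : G) : Γ ≃g Γ where
  toEquiv := MulAction.toPerm g
  map_rel_iff' := (hact g _ _).symm

end SimpleGraph

open SimpleGraph

lemma Set.Infinite.exists_smul_mem_ne {G α : Type*} [Group G] [MulAction G α]
    [Finite (Quotient (MulAction.orbitRel G α))] {s : Set α} (hs : s.Infinite) :
    ∃ g : G, ∃ b ∈ s, g • b ∈ s ∧ g • b ≠ b := by
  obtain ⟨a, ha, b, hb, hne, hab⟩ := hs.exists_ne_map_eq_of_mapsTo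
    (Set.mapsTo_univ (Quotient.mk (MulAction.orbitRel G α)) s) Set.finite_univ
  obtain ⟨g, rfl⟩ := MulAction.mem_orbit_iff.mp (Quotient.eq''.mp hab)
  exact ⟨g, b, hb, ha, hne⟩

/-- If a group `G` acts by automorphisms on a graph `Γ` with finite quotient and all
vertex degrees at most `2`, then no connected component is a half-line: every infinite
component is a bi-infinite line, i.e. all of its vertices have degree exactly `2`. -/
theorem stmt15 {G V : Type*} [Group G] [MulAction G V] (Γ : SimpleGraph V)
    (hact : ∀ (g : G) (u v : V), Γ.Adj u v ↔ Γ.Adj (g • u) (g • v))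
    (hquot : Finite (Quotient (MulAction.orbitRel G V)))
    (hdeg : ∀ v : V, (Γ.neighborSet v).Finite ∧ (Γ.neighborSet v).ncard ≤ 2) :
    ∀ v : V, ¬ (Γ.connectedComponentMk v).supp.Finite →
      ∀ w ∈ (Γ.connectedComponentMk v).supp, (Γ.neighborSet w).ncard = 2 := by
  intro v hinf w hw
  have hcard : ∀ x, (Γ.neighborSet x).encard = (Γ.neighborSet x).ncard :=
    fun x => (hdeg x).1.cast_ncard_eq.symm
  have hdeg' : ∀ x, (Γ.neighborSet x).encard ≤ 2 := fun x => by
    rw [hcard]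
    exact_mod_cast (hdeg x).2
  by_contra hw2
  have hw1 : (Γ.neighborSet w).encard ≤ 1 := by
    rw [hcard]
    exact_mod_cast Nat.le_of_lt_succ ((hdeg w).2.lt_of_ne hw2)
  have hC : (Γ.connectedComponentMk v).supp = {x | Γ.Reachable w x} := by
    ext x
    rw [ConnectedComponent.mem_supp_iff] at hw ⊢
    rw [← hw, ConnectedComponent.eq]
    exact ⟨Reachable.symm, Reachable.symm⟩
  rw [hC] at hinf
  obtain ⟨g, b, hb, hgb, hne⟩ := Set.Infinite.exists_smul_mem_ne (G := G) hinf
  let φ := smulIso hact g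
  have hφw : φ w = w := Iso.apply_eq_self_of_infinite_setOf_reachable hdeg' hw1 hinf φ
    (hgb.trans ((Iso.reachable_iff (φ := φ)).mpr hb).symm)
  exact hne (Iso.apply_eq_self_of_reachable hdeg' hw1 φ hφw hb)
end

section
/- Let G be a group acting on a set, and let (θ̄(p))_{p ∈ P} be a finite family of nonnegative reals indexed by a finite set P, satisfying a finite homogeneous system of linear equations with integer coefficients: Σ_{p ∈ A_J} θ̄(p) = Σ_{p ∈ B_J} θ̄(p) for finitely many pairs of subsets (A_J, B_J) of P. Then for every ε̂ > 0 there exist M ∈ ℕ and a family (θ(p))_{p ∈ P} of nonnegative integers satisfying the same system of equations, such that |θ(p)/M − θ̄(p)| < ε̂ for all p ∈ P. -/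
/-!
The real solutions of a homogeneous linear system with rational coefficients are the closure of
its rational solutions: adding one equation `u ⬝ᵥ x = 0` at a time, either every rational solution
of the previous equations already satisfies it, or some rational solution `s` does not, and then
`x ↦ x - (u ⬝ᵥ x / u ⬝ᵥ s) • s` is a continuous retraction onto the new solution space that maps
rational solutions to rational solutions. Adding the equations `θ p = 0` for the coordinates where
`θb` vanishes, a rational solution close enough to `θb` is nonnegative, and clearing denominators
gives `θ` and `M`.
-/

open Matrix Filter Topology

lemma closure_range_ratCast_comp (P : Type*) :
    closure (Set.range (Rat.cast ∘ · : (P → ℚ) → P → ℝ)) = Set.univ :=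
  (DenseRange.piMap fun _ => Rat.denseRange_cast).closure_range

section RationalPoints

variable {P κ : Type*} [Fintype P]

lemma ratCast_dotProduct_ratCast (u v : P → ℚ) :
    (Rat.cast ∘ u : P → ℝ) ⬝ᵥ (Rat.cast ∘ v) = ((u ⬝ᵥ v : ℚ) : ℝ) :=
  ((Rat.castHom ℝ).map_dotProduct u v).symm

lemma mem_closure_solutions_insert [DecidableEq κ] (a : κ → P → ℚ) (T : Finset κ) (j : κ)
    {s : P → ℚ} (hs : ∀ i ∈ T, a i ⬝ᵥ s = 0) (hjs : a j ⬝ᵥ s ≠ 0) {x : P → ℝ}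
    (hx : x ∈ closure ((Rat.cast ∘ ·) '' {q : P → ℚ | ∀ i ∈ T, a i ⬝ᵥ q = 0}))
    (hjx : (Rat.cast ∘ a j) ⬝ᵥ x = 0) :
    x ∈ closure ((Rat.cast ∘ ·) '' {q : P → ℚ | ∀ i ∈ insert j T, a i ⬝ᵥ q = 0}) := by
  set c := a j ⬝ᵥ s
  let π : (P → ℝ) → P → ℝ := fun y => y - ((Rat.cast ∘ a j) ⬝ᵥ y / c) • (Rat.cast ∘ s)
  have hπ : Continuous π := by fun_prop
  have hπx : π x = x := by simp [π, hjx]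
  refine hπx ▸ map_mem_closure hπ hx ?_
  rintro _ ⟨q, hq, rfl⟩
  refine ⟨q - (a j ⬝ᵥ q / c) • s, ?_, ?_⟩
  · intro i hi
    rcases Finset.mem_insert.mp hi with rfl | hi
    · simp [dotProduct_sub, dotProduct_smul, c, div_mul_cancel₀ _ hjs]
    · simp [dotProduct_sub, dotProduct_smul, hq i hi, hs i hi]
  · ext p
    simp [π, ratCast_dotProduct_ratCast]

theorem mem_closure_ratCast_solutions (a : κ → P → ℚ) (T : Finset κ) {x : P → ℝ}
    (hx : ∀ j ∈ T, (Rat.cast ∘ a j) ⬝ᵥ x = 0) :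
    x ∈ closure ((Rat.cast ∘ ·) '' {q : P → ℚ | ∀ j ∈ T, a j ⬝ᵥ q = 0}) := by
  classical
  induction T using Finset.induction_on with
  | empty => simp [Set.image_univ, closure_range_ratCast_comp]
  | @insert j T _ ih =>
    have hxT := ih fun i hi => hx i (Finset.mem_insert_of_mem hi)
    by_cases h : ∀ q : P → ℚ, (∀ i ∈ T, a i ⬝ᵥ q = 0) → a j ⬝ᵥ q = 0
    · refine closure_mono (Set.image_mono fun q hq i hi => ?_) hxT
      rcases Finset.mem_insert.mp hi with rfl | hi
      exacts [h q hq, hq i hi]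
    · push Not at h
      obtain ⟨s, hs, hjs⟩ := h
      exact mem_closure_solutions_insert a T j hs hjs hxT (hx j (Finset.mem_insert_self j T))

end RationalPoints

lemma eventually_abs_sub_lt_and_pos {P : Type*} [Finite P] (x : P → ℝ) {ε : ℝ} (hε : 0 < ε) :
    ∀ᶠ y in 𝓝 x, ∀ p, |y p - x p| < ε ∧ (0 < x p → 0 < y p) :=
  eventually_all.2 fun p => ((continuous_apply p).tendsto x).eventually <|
    (eventually_abs_sub_lt _ hε).and <| eventually_imp_distrib_left.2 eventually_gt_nhds

section BalanceSystem

variable {P ι : Type*} [Fintype P] [DecidableEq P]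

/-- Index `inl j` encodes `∑ p ∈ A j, θ p - ∑ p ∈ B j, θ p = 0`, and `inr p₀` encodes `θ p₀ = 0`. -/
def balanceCoeffs (A B : ι → Finset P) : ι ⊕ P → P → ℚ
  | .inl j => fun p => (if p ∈ A j then 1 else 0) - (if p ∈ B j then 1 else 0)
  | .inr p₀ => Pi.single p₀ 1

variable {R : Type*} [DivisionRing R] (A B : ι → Finset P) (x : P → R)

lemma ratCast_balanceCoeffs_inl_dotProduct [CharZero R] (j : ι) :
    (Rat.cast ∘ balanceCoeffs A B (.inl j)) ⬝ᵥ x = ∑ p ∈ A j, x p - ∑ p ∈ B j, x p := by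
  simp [balanceCoeffs, dotProduct, apply_ite (Rat.cast : ℚ → R), sub_mul, Finset.sum_sub_distrib,
    ite_mul, Finset.sum_ite_mem]

lemma ratCast_balanceCoeffs_inr_dotProduct (p₀ : P) :
    (Rat.cast ∘ balanceCoeffs A B (.inr p₀)) ⬝ᵥ x = x p₀ := by
  simp [balanceCoeffs, dotProduct, Pi.single_apply, apply_ite (Rat.cast : ℚ → R)]

end BalanceSystem

theorem exists_nonneg_rat_balanced_approx {P ι : Type*} [Fintype P] [Fintype ι]
    (A B : ι → Finset P) (θb : P → ℝ) (hpos : ∀ p, 0 ≤ θb p)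
    (hsys : ∀ j, ∑ p ∈ A j, θb p = ∑ p ∈ B j, θb p) {ε : ℝ} (hε : 0 < ε) :
    ∃ q : P → ℚ, (∀ j, ∑ p ∈ A j, q p = ∑ p ∈ B j, q p) ∧ (∀ p, 0 ≤ q p) ∧
      ∀ p, |(q p : ℝ) - θb p| < ε := by
  classical
  set T : Finset (ι ⊕ P) := Finset.univ.disjSum (Finset.univ.filter (θb · = 0))
  have hθb : ∀ k ∈ T, (Rat.cast ∘ balanceCoeffs A B k) ⬝ᵥ θb = 0 := by
    rintro (j | p) hk
    · simp [ratCast_balanceCoeffs_inl_dotProduct, hsys]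
    · simpa [ratCast_balanceCoeffs_inr_dotProduct, T] using hk
  obtain ⟨_, ⟨q, hq, rfl⟩, hqθb⟩ :=
    ((mem_closure_iff_frequently.1 (mem_closure_ratCast_solutions _ T hθb)).and_eventually
      (eventually_abs_sub_lt_and_pos θb hε)).exists
  refine ⟨q, fun j => ?_, fun p => ?_, fun p => (hqθb p).1⟩
  · have h := ratCast_balanceCoeffs_inl_dotProduct A B q j
    rwa [Rat.cast_eq_id, Function.id_comp, hq (.inl j) (by simp [T]), eq_comm, sub_eq_zero] at h
  · by_cases hp : θb p = 0
    · have h := ratCast_balanceCoeffs_inr_dotProduct A B q p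
      rw [Rat.cast_eq_id, Function.id_comp, hq (.inr p) (by simp [T, hp])] at h
      exact h.le
    · exact_mod_cast (show (0 : ℝ) < q p from (hqθb p).2 ((hpos p).lt_of_ne' hp)).le

theorem Rat.exists_pos_nat_mul_eq_natCast {P : Type*} [Fintype P] (q : P → ℚ)
    (hq : ∀ p, 0 ≤ q p) :
    ∃ (M : ℕ) (θ : P → ℕ), 0 < M ∧ ∀ p, (θ p : ℚ) = M * q p := by
  refine ⟨∏ p, (q p).den, fun p => (∏ p, (q p).den) / (q p).den * (q p).num.toNat,
    Finset.prod_pos fun p _ => (q p).pos, fun p => ?_⟩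
  have hdvd : (q p).den ∣ ∏ p, (q p).den := Finset.dvd_prod_of_mem _ (Finset.mem_univ p)
  conv_rhs => rw [← Nat.div_mul_cancel hdvd]
  rw [Nat.cast_mul, Nat.cast_mul, mul_assoc, Rat.den_mul_eq_num]
  congr 1
  exact_mod_cast Int.toNat_of_nonneg (Rat.num_nonneg.mpr (hq p))

/-- Rational approximation of nonnegative solutions of a finite homogeneous system of
linear equations of the form `∑_{p ∈ A j} θ p = ∑_{p ∈ B j} θ p`: any nonnegative real
solution can be approximated by `θ/M` with `θ` a nonnegative-integer solution. -/
theorem stmt17 {P ι : Type*} [Fintype P] [Fintype ι]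
    (A B : ι → Finset P) (θb : P → ℝ) (hpos : ∀ p, 0 ≤ θb p)
    (hsys : ∀ j : ι, ∑ p ∈ A j, θb p = ∑ p ∈ B j, θb p) :
    ∀ ε : ℝ, 0 < ε → ∃ (M : ℕ) (θ : P → ℕ), 0 < M ∧
      (∀ j : ι, ∑ p ∈ A j, (θ p : ℝ) = ∑ p ∈ B j, (θ p : ℝ)) ∧
      ∀ p : P, |(θ p : ℝ) / (M : ℝ) - θb p| < ε := by
  intro ε hε
  obtain ⟨q, hq_sys, hq_nonneg, hqθb⟩ := exists_nonneg_rat_balanced_approx A B θb hpos hsys hε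
  obtain ⟨M, θ, hM, hθ⟩ := Rat.exists_pos_nat_mul_eq_natCast q hq_nonneg
  refine ⟨M, θ, hM, fun j => ?_, fun p => ?_⟩
  · have hθj : ∑ p ∈ A j, (θ p : ℚ) = ∑ p ∈ B j, (θ p : ℚ) := by
      simp only [hθ, ← Finset.mul_sum, hq_sys j]
    exact_mod_cast hθj
  · have hθp : (θ p : ℝ) / M = q p := by
      rw [div_eq_iff (by positivity), mul_comm]
      exact_mod_cast hθ p
    exact hθp ▸ hqθb p
end
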